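/- arXiv:2602.12570 — 2 statements merged into one kernel-verified Lean document; each statement's English description precedes it below -/
import Mathlib

section
/- The rolling-around-the-edge map in dimension n+1 with cos(πη_{n+1}) coincides with the no-slip collision rotation parameter in dimension n precisely when (1−γₙ²)/(1+γₙ²) = cos(π γ_{n+1}/√(1+γ_{n+1}²)); moreover, given any γ_{n+1} ∈ [0, ∞), there exists a unique γₙ ∈ [0, ∞] satisfying this relation when the right-hand side lies in (−1, 1], since γ ↦ (1−γ²)/(1+γ²) is a strictly decreasing bijection from [0,∞) onto (−1, 1]. -/
open Real

lemma gm_strictAnti : StrictAntiOn (fun γ : ℝ => (1 - γ^2) / (1 + γ^2)) (Set.Ici 0) := by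
  intro a ha b hb hab
  simp only [Set.mem_Ici] at ha hb
  have h1 : (0:ℝ) < 1 + a^2 := by positivity
  have h2 : (0:ℝ) < 1 + b^2 := by positivity
  rw [div_lt_div_iff₀ h2 h1]
  nlinarith [mul_self_nonneg (a+b), mul_self_nonneg (a-b)]

lemma gm_mem (γ : ℝ) (hγ : 0 ≤ γ) : (1 - γ^2) / (1 + γ^2) ∈ Set.Ioc (-1 : ℝ) 1 := by
  have h1 : (0:ℝ) < 1 + γ^2 := by positivity
  constructor
  · rw [lt_div_iff₀ h1]; nlinarith
  · rw [div_le_one h1]; nlinarith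

lemma gm_surj (y : ℝ) (hy : y ∈ Set.Ioc (-1 : ℝ) 1) :
    ∃ γ : ℝ, 0 ≤ γ ∧ (1 - γ^2) / (1 + γ^2) = y := by
  obtain ⟨hy1, hy2⟩ := hy
  have hpos : (0:ℝ) < 1 + y := by linarith
  refine ⟨Real.sqrt ((1 - y) / (1 + y)), Real.sqrt_nonneg _, ?_⟩
  have hsq : (Real.sqrt ((1 - y) / (1 + y)))^2 = (1 - y) / (1 + y) := by
    rw [Real.sq_sqrt]
    exact div_nonneg (by linarith) hpos.le
  rw [hsq]
  field_simp
  ring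

lemma gm_image : (fun γ : ℝ => (1 - γ^2) / (1 + γ^2)) '' Set.Ici 0 = Set.Ioc (-1 : ℝ) 1 := by
  ext y
  constructor
  · rintro ⟨γ, hγ, rfl⟩
    exact gm_mem γ hγ
  · intro hy
    obtain ⟨γ, hγ, h⟩ := gm_surj y hy
    exact ⟨γ, hγ, h⟩

theorem gamma_matching_condition :
    StrictAntiOn (fun γ : ℝ => (1 - γ^2) / (1 + γ^2)) (Set.Ici 0) ∧
    (fun γ : ℝ => (1 - γ^2) / (1 + γ^2)) '' Set.Ici 0 = Set.Ioc (-1 : ℝ) 1 ∧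
    ∀ γ₁ : ℝ, 0 ≤ γ₁ →
      ∃! γ : ℝ, 0 ≤ γ ∧
        (1 - γ^2) / (1 + γ^2) = Real.cos (π * (γ₁ / Real.sqrt (1 + γ₁^2))) := by
  refine ⟨gm_strictAnti, gm_image, ?_⟩
  intro γ₁ hγ₁
  set η : ℝ := γ₁ / Real.sqrt (1 + γ₁^2) with hη
  have hs : (0:ℝ) < Real.sqrt (1 + γ₁^2) := Real.sqrt_pos.mpr (by positivity)
  have hη0 : 0 ≤ η := div_nonneg hγ₁ hs.le
  have hη1 : η < 1 := by
    rw [hη, div_lt_one hs]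
    have : γ₁ = Real.sqrt (γ₁^2) := (Real.sqrt_sq hγ₁).symm
    rw [this]
    exact Real.sqrt_lt_sqrt (by positivity) (by nlinarith)
  have hcos : Real.cos (π * η) ∈ Set.Ioc (-1 : ℝ) 1 := by
    constructor
    · have := Real.cos_lt_cos_of_nonneg_of_le_pi (mul_nonneg Real.pi_pos.le hη0)
        le_rfl (by nlinarith [Real.pi_pos])
      simpa using this
    · exact Real.cos_le_one _
  obtain ⟨γ, hγ, heq⟩ := gm_surj _ hcos
  refine ⟨γ, ⟨hγ, heq⟩, ?_⟩
  rintro γ' ⟨hγ', heq'⟩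
  exact gm_strictAnti.injOn hγ' hγ (by rw [heq, heq'])
end

section
/- For the rolling equations on the curved part of 𝒩 (Proposition 6.2), the transversal kinetic energy E₁ = (m/2)(v₁² + v₂² + S₁₂²) is a conserved quantity: if v₁, v₂, S₁₂ satisfy v̇₁ = −f_c v₂² − η f_s v₂ S₁₂, v̇₂ = f_c v₁ v₂ − (η/r) v₁ S₁₂, Ṡ₁₂ = η(f_s + 1/r) v₁ v₂, then d/dt (v₁² + v₂² + S₁₂²) = 0. -/
theorem hasDerivAt_sq_add_sq_add_sq {𝕜 : Type*} [NontriviallyNormedField 𝕜]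
    {f g h : 𝕜 → 𝕜} {f' g' h' t : 𝕜}
    (hf : HasDerivAt f f' t) (hg : HasDerivAt g g' t) (hh : HasDerivAt h h' t) :
    HasDerivAt (fun τ => f τ ^ 2 + g τ ^ 2 + h τ ^ 2) (2 * (f t * f' + g t * g' + h t * h')) t := by
  refine (((hf.fun_pow 2).add (hg.fun_pow 2)).add (hh.fun_pow 2)).congr_deriv ?_
  ring

theorem transversal_energy_conserved_general
    (f_c f_s : ℝ → ℝ) (η r : ℝ)
    (v₁ v₂ S₁₂ : ℝ → ℝ)
    (h₁ : ∀ t, HasDerivAt v₁ (-(f_c t * v₂ t ^ 2) - η * f_s t * v₂ t * S₁₂ t) t)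
    (h₂ : ∀ t, HasDerivAt v₂ (f_c t * v₁ t * v₂ t - (η / r) * v₁ t * S₁₂ t) t)
    (h₃ : ∀ t, HasDerivAt S₁₂ (η * (f_s t + 1 / r) * v₁ t * v₂ t) t) :
    ∀ t, HasDerivAt (fun τ => v₁ τ ^ 2 + v₂ τ ^ 2 + S₁₂ τ ^ 2) 0 t := by
  intro t
  refine (hasDerivAt_sq_add_sq_add_sq (h₁ t) (h₂ t) (h₃ t)).congr_deriv ?_
  -- the f_c-terms cancel between v₁ and v₂, the f_s-terms between v₁ and S₁₂, the 1/r-terms between v₂ and S₁₂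
  ring

theorem transversal_energy_conserved
    (f_c f_s : ℝ → ℝ) (η r : ℝ) (hη : 0 < η) (hr : 0 < r)
    (v₁ v₂ S₁₂ : ℝ → ℝ)
    (h₁ : ∀ t, HasDerivAt v₁ (-(f_c t * v₂ t ^ 2) - η * f_s t * v₂ t * S₁₂ t) t)
    (h₂ : ∀ t, HasDerivAt v₂ (f_c t * v₁ t * v₂ t - (η / r) * v₁ t * S₁₂ t) t)
    (h₃ : ∀ t, HasDerivAt S₁₂ (η * (f_s t + 1 / r) * v₁ t * v₂ t) t) :
    ∀ t, HasDerivAt (fun τ => v₁ τ ^ 2 + v₂ τ ^ 2 + S₁₂ τ ^ 2) 0 t :=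
  transversal_energy_conserved_general f_c f_s η r v₁ v₂ S₁₂ h₁ h₂ h₃
end
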